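/- There exists a constant C > 0 such that for every natural number n ≥ 2, the sum over all binary words x of length n of |d(x) − log₂ n| is at most C · 2^n, where d(x) is the length of the longest run of 0's in x and log₂ n is the real base-2 logarithm. (This concentration of the longest 0-run around log₂ n is the combinatorial content of the theorem that the average-case query complexity of string reconstruction is n + O(1): the seed-finding phase costs on average O(1) queries beyond a constant.) -/

import Mathlib

/-!
Put `a = ⌊log₂ n⌋`, so that `|d(x) - log₂ n| ≤ (d(x) - a)₊ + (a - d(x))₊ + 1`, and write each
tail sum as a sum of tail counts. A run of length `a + j + 1` starts at one of at most
`n < 2^(a+1)` places, so at most a `2^(-j)` fraction of the words have one. For the lower tail,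
cut the word into `m = ⌊n / 2K⌋` blocks of length `2K`: a block contains a `K`-run with probability
at least `K / 2^(K+1)` (a `1` followed by `K` zeros, starting at any of `K` places), independently
across blocks, so a `(1 - K / 2^(K+1))^m ≤ 2^(K+3) / n` fraction of the words has no `K`-run.
Both tails are then geometric sums of size `O(2^n)`.
-/

/-- `longestZeroRun x` is the largest `ℓ` such that `0^ℓ` is a factor of `x`. -/
noncomputable def longestZeroRun (x : List Bool) : ℕ :=
  sSup {ℓ : ℕ | List.replicate ℓ false <:+: x}

open Finset

lemma le_longestZeroRun_iff {l : List Bool} {k : ℕ} :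
    k ≤ longestZeroRun l ↔ List.replicate k false <:+: l := by
  have hne : {ℓ : ℕ | List.replicate ℓ false <:+: l}.Nonempty := ⟨0, by simp⟩
  have hbdd : BddAbove {ℓ : ℕ | List.replicate ℓ false <:+: l} :=
    ⟨l.length, fun ℓ hℓ => by simpa using hℓ.length_le⟩
  refine ⟨fun hk => ?_, fun hk => le_csSup hbdd hk⟩
  have hprefix : List.replicate k false <+: List.replicate (longestZeroRun l) false :=
    List.prefix_iff_eq_take.2 (by simp [List.take_replicate, hk])
  exact hprefix.isInfix.trans (Nat.sSup_mem hne hbdd)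

lemma longestZeroRun_le_length (l : List Bool) : longestZeroRun l ≤ l.length := by
  simpa using (le_longestZeroRun_iff.1 le_rfl).length_le

def HasZeroRun {n : ℕ} (k : ℕ) (x : Fin n → Bool) : Prop :=
  ∃ i, i + k ≤ n ∧ ∀ j : Fin n, (j : ℕ) ∈ Ico i (i + k) → x j = false

lemma replicate_false_infix_ofFn_iff {n k : ℕ} {x : Fin n → Bool} :
    List.replicate k false <:+: List.ofFn x ↔ HasZeroRun k x := by
  simp only [List.infix_iff_getElem?, List.length_replicate, List.length_ofFn,
    List.getElem_replicate, HasZeroRun, mem_Ico]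
  refine exists_congr fun i => ?_
  rw [add_comm k i]
  refine and_congr_right fun hi => ⟨fun h j hj => ?_, fun h t ht => ?_⟩
  · have := h (j - i) (by omega)
    rw [show j - i + i = j by omega, List.getElem?_ofFn] at this
    simpa using this
  · rw [List.getElem?_ofFn]
    simp [show t + i < n by omega, h ⟨t + i, by omega⟩ (by simp; omega)]

lemma le_longestZeroRun_ofFn_iff {n k : ℕ} {x : Fin n → Bool} :
    k ≤ longestZeroRun (List.ofFn x) ↔ HasZeroRun k x :=
  le_longestZeroRun_iff.trans replicate_false_infix_ofFn_iff

lemma HasZeroRun.of_comp {n L k o : ℕ} {x : Fin n → Bool} {f : Fin L → Fin n}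
    (hf : ∀ t, (f t : ℕ) = o + t) (h : HasZeroRun k (x ∘ f)) : HasZeroRun k x := by
  obtain ⟨i, hi, hrun⟩ := h
  rcases Nat.eq_zero_or_pos k with rfl | hk
  · exact ⟨0, by omega, by simp⟩
  have hlast : o + (i + k - 1) < n := by simpa [hf] using (f ⟨i + k - 1, by omega⟩).isLt
  refine ⟨o + i, by omega, fun j hj => ?_⟩
  rw [mem_Ico] at hj
  have hj' : f ⟨j - o, by omega⟩ = j := Fin.ext (by rw [hf]; simp; omega)
  simpa [hj'] using hrun ⟨j - o, by omega⟩ (by simp; omega)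

lemma card_filter_forall_mem_eq {ι β : Type*} [Fintype ι] [DecidableEq ι] [Fintype β]
    [DecidableEq β] (s : Finset ι) (g : ι → β) :
    #{x : ι → β | ∀ i ∈ s, x i = g i} = Fintype.card β ^ (Fintype.card ι - #s) := by
  have hpi : ({x : ι → β | ∀ i ∈ s, x i = g i} : Finset (ι → β)) =
      Fintype.piFinset fun i => if i ∈ s then {g i} else univ := by
    ext x
    simp only [mem_filter, mem_univ, true_and, Fintype.mem_piFinset]
    refine forall_congr' fun i => ?_
    split_ifs with h <;> simp [h]
  rw [hpi, Fintype.card_piFinset]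
  simp only [apply_ite card, card_singleton, card_univ]
  rw [prod_ite]
  simp [filter_not, card_sdiff_of_subset]

lemma card_filter_forall_val_mem_eq {n : ℕ} (S : Finset ℕ) (hS : ∀ m ∈ S, m < n)
    (g : Fin n → Bool) :
    #{x : Fin n → Bool | ∀ j : Fin n, (j : ℕ) ∈ S → x j = g j} = 2 ^ (n - #S) := by
  simpa [mem_attachFin, card_attachFin] using card_filter_forall_mem_eq (S.attachFin hS) g

lemma one_sub_pow_mul_le_one {t : ℝ} (ht₀ : 0 ≤ t) (ht₁ : t ≤ 1) (m : ℕ) :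
    (1 - t) ^ m * (m * t) ≤ 1 := by
  calc (1 - t) ^ m * (m * t) ≤ Real.exp (-t) ^ m * Real.exp (m * t) := by
        gcongr
        · exact Real.one_sub_le_exp_neg t
        · linarith [Real.add_one_le_exp (m * t)]
    _ = 1 := by rw [← Real.exp_nat_mul, ← Real.exp_add]; simp

lemma Finset.sum_eq_sum_range_card_filter_lt {ι : Type*} (s : Finset ι) (f : ι → ℕ) {N : ℕ}
    (hf : ∀ i ∈ s, f i ≤ N) : ∑ i ∈ s, f i = ∑ j ∈ range N, #{i ∈ s | j < f i} := by
  simp_rw [card_filter]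
  rw [sum_comm]
  refine sum_congr rfl fun i hi => ?_
  rw [← card_filter, show {j ∈ range N | j < f i} = range (f i) by
    ext j; simp only [mem_filter, mem_range]; have := hf i hi; omega]
  exact (card_range _).symm

lemma sum_range_le_two_mul_of_mul_two_pow_le {c : ℕ → ℝ} {M : ℝ} {N : ℕ} (hM : 0 ≤ M)
    (hc : ∀ j < N, c j * 2 ^ j ≤ M) : ∑ j ∈ range N, c j ≤ 2 * M := by
  calc ∑ j ∈ range N, c j ≤ ∑ j ∈ range N, M * (1 / 2) ^ j := by
        refine sum_le_sum fun j hj => ?_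
        rw [one_div_pow, mul_one_div, le_div_iff₀ (by positivity)]
        exact hc j (mem_range.1 hj)
    _ = M * ∑ j ∈ range N, (1 / 2 : ℝ) ^ j := by rw [mul_sum]
    _ ≤ M * 2 := by gcongr; exact sum_geometric_two_le N
    _ = 2 * M := mul_comm _ _

lemma Nat.two_mul_le_two_pow {K : ℕ} (hK : 1 ≤ K) : 2 * K ≤ 2 ^ K := by
  have : K - 1 < 2 ^ (K - 1) := Nat.lt_two_pow_self
  rw [show K = K - 1 + 1 by omega, pow_succ]
  omega

lemma abs_sub_logb_le (b u n : ℕ) :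
    |(u : ℝ) - Real.logb b n| ≤ (u - Nat.log b n : ℕ) + (Nat.log b n - u : ℕ) + 1 := by
  have hlow : (Nat.log b n : ℝ) ≤ Real.logb b n := Real.natLog_le_logb n b
  have hup : Real.logb b n < Nat.log b n + 1 := by
    have := Int.lt_floor_add_one (Real.logb b n)
    rwa [Real.floor_logb_natCast (Nat.cast_nonneg n), Int.log_natCast] at this
  have hu : (u : ℝ) ≤ (u - Nat.log b n : ℕ) + Nat.log b n := by exact_mod_cast le_tsub_add
  have hlog : (Nat.log b n : ℝ) ≤ (Nat.log b n - u : ℕ) + u := by exact_mod_cast le_tsub_add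
  rw [abs_le]
  constructor <;> linarith [(u - Nat.log b n : ℕ).cast_nonneg (α := ℝ),
    (Nat.log b n - u : ℕ).cast_nonneg (α := ℝ)]

section Counting

open scoped Classical

lemma card_hasZeroRun_le {n k : ℕ} (hk : k ≤ n) :
    #{x : Fin n → Bool | HasZeroRun k x} ≤ (n - k + 1) * 2 ^ (n - k) := by
  have hcover : ({x | HasZeroRun k x} : Finset (Fin n → Bool)) ⊆ (range (n - k + 1)).biUnion
      fun i => {x | ∀ j : Fin n, (j : ℕ) ∈ Ico i (i + k) → x j = false} := by
    intro x hx
    obtain ⟨i, hi, hrun⟩ := (mem_filter.1 hx).2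
    exact mem_biUnion.2 ⟨i, mem_range.2 (by omega), mem_filter.2 ⟨mem_univ x, hrun⟩⟩
  calc _ ≤ _ := card_le_card hcover
    _ ≤ ∑ i ∈ range (n - k + 1), 2 ^ (n - k) := by
      refine card_biUnion_le.trans (sum_le_sum fun i hi => ?_)
      rw [card_filter_forall_val_mem_eq _ (fun m hm => by simp at hi hm; omega), Nat.card_Ico,
        Nat.add_sub_cancel_left]
    _ = (n - k + 1) * 2 ^ (n - k) := by simp

lemma mul_two_pow_le_card_hasZeroRun (k : ℕ) :
    k * 2 ^ (k - 1) ≤ #{y : Fin (2 * k) → Bool | HasZeroRun k y} := by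
  -- `E i`: a `1` at position `i` followed by `k` zeros
  set E : ℕ → Finset (Fin (2 * k) → Bool) :=
    fun i => {y | ∀ j : Fin (2 * k), (j : ℕ) ∈ Icc i (i + k) → y j = decide ((j : ℕ) = i)}
  have hcard : ∀ i ∈ range k, #(E i) = 2 ^ (k - 1) := fun i hi => by
    rw [card_filter_forall_val_mem_eq _ (fun m hm => by simp at hi hm; omega), Nat.card_Icc]
    congr 1
    omega
  have hdisj : (range k : Set ℕ).PairwiseDisjoint E := by
    intro i hi i' hi' hne
    wlog hlt : i < i' generalizing i i'
    · exact (this hi' hi hne.symm (by omega)).symm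
    refine disjoint_left.2 fun y hy hy' => ?_
    simp only [E, mem_filter, mem_univ, true_and, mem_Icc] at hy hy'
    simp only [coe_range, Set.mem_Iio] at hi'
    have h₁ := hy ⟨i', by omega⟩ (by simp; omega)
    have h₂ := hy' ⟨i', by omega⟩ (by simp)
    simp_all
  have hsub : (range k).biUnion E ⊆ ({y | HasZeroRun k y} : Finset _) := by
    intro y hy
    obtain ⟨i, hi, hy⟩ := mem_biUnion.1 hy
    simp only [E, mem_filter, mem_univ, true_and, mem_Icc] at hy ⊢
    rw [mem_range] at hi
    refine ⟨i + 1, by omega, fun j hj => ?_⟩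
    rw [mem_Ico] at hj
    simpa [show (j : ℕ) ≠ i by omega] using hy j (by omega)
  calc k * 2 ^ (k - 1) = ∑ i ∈ range k, #(E i) := by simp [sum_congr rfl hcard]
    _ = #((range k).biUnion E) := (card_biUnion hdisj).symm
    _ ≤ _ := card_le_card hsub

lemma card_not_hasZeroRun_two_mul_le (k : ℕ) :
    (#{y : Fin (2 * k) → Bool | ¬HasZeroRun k y} : ℝ) ≤ 2 ^ (2 * k) * (1 - k / 2 ^ (k + 1)) := by
  have hsplit : #{y : Fin (2 * k) → Bool | HasZeroRun k y} +
      #{y : Fin (2 * k) → Bool | ¬HasZeroRun k y} = 2 ^ (2 * k) := by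
    rw [card_filter_add_card_filter_not]
    simp
  have hnat : #{y : Fin (2 * k) → Bool | ¬HasZeroRun k y} + k * 2 ^ (k - 1) ≤ 2 ^ (2 * k) := by
    have := mul_two_pow_le_card_hasZeroRun k
    omega
  have hreal : (#{y : Fin (2 * k) → Bool | ¬HasZeroRun k y} : ℝ) + k * 2 ^ (k - 1) ≤
      2 ^ (2 * k) := by
    exact_mod_cast hnat
  rcases Nat.eq_zero_or_pos k with rfl | hk
  · simpa using hreal
  have hkt : (k : ℝ) * 2 ^ (k - 1) = 2 ^ (2 * k) * (k / 2 ^ (k + 1)) := by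
    rw [show 2 * k = (k - 1) + (k + 1) by omega, pow_add]
    field_simp
  linarith

lemma card_not_hasZeroRun_le_pow {n k L m : ℕ} (hm : m * L ≤ n) :
    #{x : Fin n → Bool | ¬HasZeroRun k x} ≤
      #{y : Fin L → Bool | ¬HasZeroRun k y} ^ m * 2 ^ (n - m * L) := by
  let e : (Fin m × Fin L) ⊕ Fin (n - m * L) ≃ Fin n :=
    (Equiv.sumCongr finProdFinEquiv (Equiv.refl _)).trans
      (finSumFinEquiv.trans (finCongr (by omega)))
  let blocks : (Fin n → Bool) → (Fin m → Fin L → Bool) × (Fin (n - m * L) → Bool) :=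
    fun x => (fun b t => x (e (.inl (b, t))), fun s => x (e (.inr s)))
  have hinj : Function.Injective blocks := by
    intro x x' h
    funext j
    obtain ⟨z, rfl⟩ := e.surjective j
    rcases z with ⟨b, t⟩ | s
    · exact congrFun (congrFun (congrArg Prod.fst h) b) t
    · exact congrFun (congrArg Prod.snd h) s
  have hmaps : ∀ x ∈ ({x | ¬HasZeroRun k x} : Finset (Fin n → Bool)), blocks x ∈
      Fintype.piFinset (fun _ => ({y | ¬HasZeroRun k y} : Finset (Fin L → Bool))) ×ˢ univ := by
    intro x hx
    simp only [mem_filter, mem_univ, true_and, mem_product, Fintype.mem_piFinset,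
      and_true] at hx ⊢
    exact fun b hb => hx (hb.of_comp (o := L * b) fun t => by simp [e, add_comm])
  calc _ ≤ _ := card_le_card_of_injOn blocks hmaps hinj.injOn
    _ = _ := by simp

lemma card_not_hasZeroRun_le {n k : ℕ} (hk : 1 ≤ k) (hkn : 2 * k ≤ n) :
    (#{x : Fin n → Bool | ¬HasZeroRun k x} : ℝ) ≤ 2 ^ n * 2 ^ (k + 3) / n := by
  set m := n / (2 * k)
  set t : ℝ := k / 2 ^ (k + 1) with ht
  have hmn : m * (2 * k) ≤ n := Nat.div_mul_le_self n (2 * k)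
  have ht₁ : t ≤ 1 := by
    have : (k : ℝ) < 2 ^ k := by exact_mod_cast Nat.lt_two_pow_self
    rw [div_le_one (by positivity), pow_succ]
    linarith
  have hmt : (n : ℝ) / 2 ^ (k + 3) ≤ m * t := by
    have hm : 1 ≤ m := (Nat.one_le_div_iff (by omega)).2 hkn
    have hn : n ≤ 4 * k * m := by
      have h₁ : n < m * (2 * k) + 2 * k := Nat.lt_div_mul_add (by omega)
      have h₂ : k * 1 ≤ k * m := Nat.mul_le_mul_left k hm
      nlinarith
    have hmt : (m : ℝ) * t = (4 * k * m : ℕ) / 2 ^ (k + 3) := by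
      push_cast
      rw [ht, show k + 3 = k + 1 + 2 by omega, pow_add]
      field_simp
      ring
    rw [hmt]
    gcongr
  calc (#{x : Fin n → Bool | ¬HasZeroRun k x} : ℝ)
      ≤ (#{y : Fin (2 * k) → Bool | ¬HasZeroRun k y} : ℝ) ^ m * 2 ^ (n - m * (2 * k)) := by
        exact_mod_cast card_not_hasZeroRun_le_pow hmn
    _ ≤ (2 ^ (2 * k) * (1 - t)) ^ m * 2 ^ (n - m * (2 * k)) := by
        gcongr
        exact card_not_hasZeroRun_two_mul_le k
    _ = 2 ^ n * (1 - t) ^ m := by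
        rw [mul_pow, ← pow_mul, mul_right_comm, ← pow_add, mul_comm (2 * k),
          Nat.add_sub_cancel' hmn]
    _ ≤ 2 ^ n * 2 ^ (k + 3) / n := by
        rw [mul_div_assoc]
        gcongr
        rw [le_div_iff₀ (by exact_mod_cast (show 0 < n by omega))]
        have h : (1 - t) ^ m * (n / 2 ^ (k + 3)) ≤ 1 :=
          le_trans (by gcongr) (one_sub_pow_mul_le_one (by positivity) ht₁ m)
        rwa [mul_div_assoc', div_le_one (by positivity)] at h

lemma sum_longestZeroRun_sub_log_le (n : ℕ) :
    ((∑ x : Fin n → Bool, (longestZeroRun (List.ofFn x) - Nat.log 2 n) : ℕ) : ℝ) ≤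
      2 * 2 ^ n := by
  set a := Nat.log 2 n
  have hd : ∀ x : Fin n → Bool, longestZeroRun (List.ofFn x) ≤ n := fun x => by
    simpa using longestZeroRun_le_length (List.ofFn x)
  rw [sum_eq_sum_range_card_filter_lt (N := n - a) univ _ fun x _ => by have := hd x; omega]
  push_cast
  refine sum_range_le_two_mul_of_mul_two_pow_le (by positivity) fun j hj => ?_
  have hfilter : #{x : Fin n → Bool | j < longestZeroRun (List.ofFn x) - a} =
      #{x : Fin n → Bool | HasZeroRun (a + j + 1) x} := by
    congr 1
    ext x
    simp only [mem_filter, mem_univ, true_and, ← le_longestZeroRun_ofFn_iff]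
    omega
  have hlog : n < 2 ^ (a + 1) := Nat.lt_pow_succ_log_self (by norm_num) n
  have hcount : #{x : Fin n → Bool | HasZeroRun (a + j + 1) x} * 2 ^ j ≤ 2 ^ n :=
    calc _ ≤ (n - (a + j + 1) + 1) * 2 ^ (n - (a + j + 1)) * 2 ^ j := by
          gcongr
          exact card_hasZeroRun_le (by omega)
      _ ≤ 2 ^ (a + 1) * 2 ^ (n - (a + j + 1)) * 2 ^ j := by gcongr; omega
      _ = 2 ^ n := by rw [← pow_add, ← pow_add]; congr 1; omega
  rw [hfilter]
  exact_mod_cast hcount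

lemma sum_log_sub_longestZeroRun_le (n : ℕ) :
    ((∑ x : Fin n → Bool, (Nat.log 2 n - longestZeroRun (List.ofFn x)) : ℕ) : ℝ) ≤
      16 * 2 ^ n := by
  set a := Nat.log 2 n
  rw [sum_eq_sum_range_card_filter_lt (N := a) univ _ fun x _ => Nat.sub_le _ _]
  push_cast
  rw [show (16 : ℝ) * 2 ^ n = 2 * (8 * 2 ^ n) by ring]
  refine sum_range_le_two_mul_of_mul_two_pow_le (by positivity) fun j hj => ?_
  have hfilter : #{x : Fin n → Bool | j < a - longestZeroRun (List.ofFn x)} =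
      #{x : Fin n → Bool | ¬HasZeroRun (a - j) x} := by
    congr 1
    ext x
    simp only [mem_filter, mem_univ, true_and, ← le_longestZeroRun_ofFn_iff]
    omega
  have hn : n ≠ 0 := by
    rintro rfl
    simp [a] at hj
  have hpow : 2 ^ a ≤ n := Nat.pow_log_le_self 2 hn
  have hrun : 2 * (a - j) ≤ n :=
    calc 2 * (a - j) ≤ 2 ^ (a - j) := Nat.two_mul_le_two_pow (by omega)
      _ ≤ 2 ^ a := Nat.pow_le_pow_right (by norm_num) (Nat.sub_le a j)
      _ ≤ n := hpow
  rw [hfilter]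
  calc (#{x : Fin n → Bool | ¬HasZeroRun (a - j) x} : ℝ) * 2 ^ j
      ≤ 2 ^ n * 2 ^ (a - j + 3) / n * 2 ^ j := by
        gcongr
        exact card_not_hasZeroRun_le (by omega) hrun
    _ = 8 * 2 ^ n * (2 ^ a / n) := by
        have h : (2 : ℝ) ^ (a - j + 3) * 2 ^ j = 8 * 2 ^ a := by
          rw [← pow_add, show a - j + 3 + j = a + 3 by omega, pow_add]
          ring
        rw [div_mul_eq_mul_div, mul_assoc, h]
        ring
    _ ≤ 8 * 2 ^ n * 1 := by
        gcongr
        exact div_le_one_of_le₀ (by exact_mod_cast hpow) (by positivity)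
    _ = 8 * 2 ^ n := mul_one _

end Counting

/-- The longest `0`-run concentrates around `log₂ n`: for some constant
`C > 0`, the sum of `|d(x) - log₂ n|` over all binary words `x` of length `n`
is at most `C * 2 ^ n`, for every `n ≥ 2`. -/
theorem sum_abs_dev_longest_zero_run_le :
    ∃ C : ℝ, 0 < C ∧ ∀ n : ℕ, 2 ≤ n →
      ∑ x : Fin n → Bool, |(longestZeroRun (List.ofFn x) : ℝ) - Real.logb 2 n|
        ≤ C * 2 ^ n := by
  refine ⟨19, by norm_num, fun n _ => ?_⟩
  calc ∑ x : Fin n → Bool, |(longestZeroRun (List.ofFn x) : ℝ) - Real.logb 2 n|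
      ≤ ∑ x : Fin n → Bool, (((longestZeroRun (List.ofFn x) - Nat.log 2 n : ℕ) : ℝ) +
          (Nat.log 2 n - longestZeroRun (List.ofFn x) : ℕ) + 1) :=
        sum_le_sum fun x _ => abs_sub_logb_le 2 _ n
    _ = ((∑ x : Fin n → Bool, (longestZeroRun (List.ofFn x) - Nat.log 2 n) : ℕ) : ℝ) +
          ((∑ x : Fin n → Bool, (Nat.log 2 n - longestZeroRun (List.ofFn x)) : ℕ) : ℝ) +
          2 ^ n := by
        simp [sum_add_distrib]
    _ ≤ 2 * 2 ^ n + 16 * 2 ^ n + 2 ^ n := by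
        gcongr
        · exact sum_longestZeroRun_sub_log_le n
        · exact sum_log_sub_longestZeroRun_le n
    _ = 19 * 2 ^ n := by ring
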